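/- arXiv:2302.06855 — 3 statements merged into one kernel-verified Lean document; each statement's English description precedes it below -/
import Mathlib

section
/- For any c, c' ∈ ℝ^N, (c − c')ᵀ(A c^{2m-1} − A (c')^{2m-1}) ≥ (1/2)(c − c')ᵀ(A c^{2m-2} + A (c')^{2m-2})(c − c'), where A c^{2m-1} = ∑ₙ (Φₙᵀc)^{2m-1}Φₙ and A c^{2m-2} = ∑ₙ (Φₙᵀc)^{2m-2}ΦₙΦₙᵀ. -/
open Matrix

lemma key_scalar (k : ℕ) (a b : ℝ) :
    (1 / 2 : ℝ) * ((a ^ (2 * k) + b ^ (2 * k)) * (a - b) ^ 2)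
      ≤ (a ^ (2 * k + 1) - b ^ (2 * k + 1)) * (a - b) := by
  have hne : (a ^ (2 * k + 1) - b ^ (2 * k + 1)) * (a - b)
      - (1 / 2 : ℝ) * ((a ^ (2 * k) + b ^ (2 * k)) * (a - b) ^ 2)
      = (1 / 2 : ℝ) * ((a ^ 2 - b ^ 2) * ((a ^ 2) ^ k - (b ^ 2) ^ k)) := by
    rw [pow_succ a (2 * k), pow_succ b (2 * k), pow_mul, pow_mul]
    ring
  rcases le_total (a ^ 2) (b ^ 2) with h | h
  · have h2 := pow_le_pow_left₀ (sq_nonneg a) h k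
    nlinarith [hne]
  · have h2 := pow_le_pow_left₀ (sq_nonneg b) h k
    nlinarith [hne]

lemma dp_sum {N M : ℕ} (v : Fin N → ℝ) (f : Fin M → Fin N → ℝ) :
    v ⬝ᵥ ∑ n, f n = ∑ n, v ⬝ᵥ f n := by
  simp only [dotProduct, Finset.sum_apply, Finset.mul_sum]
  rw [Finset.sum_comm]

lemma msum_mulVec {N M : ℕ} (f : Fin M → Matrix (Fin N) (Fin N) ℝ) (v : Fin N → ℝ) :
    (∑ n, f n).mulVec v = ∑ n, (f n).mulVec v := by
  ext i
  simp only [Matrix.mulVec, dotProduct, Matrix.sum_apply, Finset.sum_apply, Finset.sum_mul]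
  rw [Finset.sum_comm]

theorem stmt_8 (N M m : ℕ) (hm : 1 ≤ m)
    (Φ : Fin M → Fin N → ℝ) (c c' : Fin N → ℝ) :
    (1 / 2 : ℝ) * ((c - c') ⬝ᵥ
        (∑ n : Fin M, ((Φ n ⬝ᵥ c) ^ (2 * m - 2) + (Φ n ⬝ᵥ c') ^ (2 * m - 2)) •
          vecMulVec (Φ n) (Φ n)).mulVec (c - c'))
      ≤ (c - c') ⬝ᵥ
        (∑ n : Fin M, ((Φ n ⬝ᵥ c) ^ (2 * m - 1)) • Φ n
          - ∑ n : Fin M, ((Φ n ⬝ᵥ c') ^ (2 * m - 1)) • Φ n) := by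
  obtain ⟨k, rfl⟩ : ∃ k, m = k + 1 := ⟨m - 1, by omega⟩
  simp only [show 2 * (k + 1) - 2 = 2 * k from by omega,
    show 2 * (k + 1) - 1 = 2 * k + 1 from by omega]
  rw [← Finset.sum_sub_distrib, dp_sum, msum_mulVec, dp_sum, Finset.mul_sum]
  apply Finset.sum_le_sum
  intro n _
  have hmv : ((((Φ n ⬝ᵥ c) ^ (2 * k) + (Φ n ⬝ᵥ c') ^ (2 * k)) •
      vecMulVec (Φ n) (Φ n)).mulVec (c - c'))
      = (((Φ n ⬝ᵥ c) ^ (2 * k) + (Φ n ⬝ᵥ c') ^ (2 * k)) * (Φ n ⬝ᵥ (c - c'))) • Φ n := by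
    ext i
    simp only [Matrix.mulVec, Matrix.smul_apply, vecMulVec_apply, dotProduct, Pi.sub_apply,
      Pi.smul_apply, smul_eq_mul, Finset.mul_sum, Finset.sum_mul]
    apply Finset.sum_congr rfl
    intro j _
    ring
  rw [hmv]
  simp only [dotProduct_smul, dotProduct_sub, smul_eq_mul, dotProduct_comm (c - c') (Φ n),
    sub_dotProduct, smul_dotProduct]
  have := key_scalar k (Φ n ⬝ᵥ c) (Φ n ⬝ᵥ c')
  nlinarith [this]
end

section
/- For real numbers a, b and a positive integer m, (a − b)(a^{2m−1} − b^{2m−1}) ≥ (1/2)(a^{2m−2} + b^{2m−2})(a − b)². -/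
theorem stmt_9 (a b : ℝ) (m : ℕ) (hm : 1 ≤ m) :
    (1 / 2 : ℝ) * (a ^ (2 * m - 2) + b ^ (2 * m - 2)) * (a - b) ^ 2
      ≤ (a - b) * (a ^ (2 * m - 1) - b ^ (2 * m - 1)) := by
  obtain ⟨k, rfl⟩ : ∃ k, m = k + 1 := ⟨m - 1, (Nat.succ_pred_eq_of_pos hm).symm⟩
  have h2 : 2 * (k + 1) - 2 = 2 * k := by omega
  have h1 : 2 * (k + 1) - 1 = 2 * k + 1 := by omega
  rw [h2, h1]
  have key : 0 ≤ (a ^ 2 - b ^ 2) * ((a ^ 2) ^ k - (b ^ 2) ^ k) := by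
    rcases le_total (a ^ 2) (b ^ 2) with h | h
    · have := pow_le_pow_left₀ (sq_nonneg a) h k
      nlinarith
    · have := pow_le_pow_left₀ (sq_nonneg b) h k
      nlinarith
  have ha : a ^ (2 * k) = (a ^ 2) ^ k := by rw [pow_mul]
  have hb : b ^ (2 * k) = (b ^ 2) ^ k := by rw [pow_mul]
  have ha1 : a ^ (2 * k + 1) = (a ^ 2) ^ k * a := by rw [pow_succ, pow_mul]
  have hb1 : b ^ (2 * k + 1) = (b ^ 2) ^ k * b := by rw [pow_succ, pow_mul]
  rw [ha, hb, ha1, hb1]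
  nlinarith [key, sq_nonneg (a - b)]
end

section
/- Suppose the symmetric matrices Φ₁Φ₁ᵀ, ..., Φ_MΦ_Mᵀ span the space of all N×N symmetric matrices. Then for every nonzero c ∈ ℝ^N, the matrix A c^{2m-2} = ∑_{n=1}^M (Φₙᵀc)^{2m-2} ΦₙΦₙᵀ is positive definite. -/
open Matrix

lemma sum_mulVec' {N : ℕ} {ι : Type*} (s : Finset ι)
    (A : ι → Matrix (Fin N) (Fin N) ℝ) (x : Fin N → ℝ) :
    (∑ n ∈ s, A n) *ᵥ x = ∑ n ∈ s, A n *ᵥ x := by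
  ext i
  simp [mulVec, dotProduct, Matrix.sum_apply, Finset.sum_mul, Finset.sum_apply]
  rw [Finset.sum_comm]

lemma dotProduct_sum' {N : ℕ} {ι : Type*} (s : Finset ι) (y : Fin N → ℝ)
    (v : ι → Fin N → ℝ) : y ⬝ᵥ (∑ n ∈ s, v n) = ∑ n ∈ s, y ⬝ᵥ v n := by
  simp [dotProduct, Finset.mul_sum, Finset.sum_apply]
  rw [Finset.sum_comm]

lemma vmv_mulVec {N : ℕ} (u v x : Fin N → ℝ) :
    vecMulVec u v *ᵥ x = (v ⬝ᵥ x) • u := by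
  ext i
  simp [mulVec, vecMulVec_apply, dotProduct, Finset.mul_sum, mul_assoc, mul_comm, mul_left_comm]

lemma dot_vmv {N : ℕ} (u v x y : Fin N → ℝ) :
    y ⬝ᵥ (vecMulVec u v *ᵥ x) = (y ⬝ᵥ u) * (v ⬝ᵥ x) := by
  rw [vmv_mulVec, dotProduct_smul, smul_eq_mul]; ring

theorem stmt_10 (N M m : ℕ) (hm : 1 ≤ m)
    (Φ : Fin M → Fin N → ℝ)
    (hspan : ∀ S : Matrix (Fin N) (Fin N) ℝ, S.IsSymm →
      S ∈ Submodule.span ℝ (Set.range fun n : Fin M => vecMulVec (Φ n) (Φ n)))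
    (c : Fin N → ℝ) (hc : c ≠ 0) :
    (∑ n : Fin M, ((Φ n ⬝ᵥ c) ^ (2 * m - 2)) • vecMulVec (Φ n) (Φ n)).PosDef := by
  rw [posDef_iff_dotProduct_mulVec]
  constructor
  · -- Hermitian
    unfold Matrix.IsHermitian
    ext i j
    simp [conjTranspose_apply, Matrix.sum_apply, Matrix.smul_apply, vecMulVec_apply, mul_comm]
  · intro x hx
    have hquad : star x ⬝ᵥ ((∑ n : Fin M, ((Φ n ⬝ᵥ c) ^ (2 * m - 2)) •
        vecMulVec (Φ n) (Φ n)) *ᵥ x)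
        = ∑ n : Fin M, (Φ n ⬝ᵥ c) ^ (2 * m - 2) * (Φ n ⬝ᵥ x) ^ 2 := by
      rw [sum_mulVec', dotProduct_sum']
      refine Finset.sum_congr rfl fun n _ => ?_
      rw [smul_mulVec, dotProduct_smul, dot_vmv, smul_eq_mul]
      have : x ⬝ᵥ Φ n = Φ n ⬝ᵥ x := dotProduct_comm _ _
      simp only [star_trivial]
      rw [dotProduct_comm x (Φ n)]
      ring
    rw [hquad]
    have hterm : ∀ n : Fin M, 0 ≤ (Φ n ⬝ᵥ c) ^ (2 * m - 2) * (Φ n ⬝ᵥ x) ^ 2 := by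
      intro n
      have h1 : 0 ≤ (Φ n ⬝ᵥ c) ^ (2 * m - 2) := by
        have : 2 * m - 2 = 2 * (m - 1) := by omega
        rw [this, pow_mul]
        positivity
      positivity
    rcases lt_or_eq_of_le (Finset.sum_nonneg fun n _ => hterm n) with h | h
    · exact h
    exfalso
    -- all terms vanish
    have hzero : ∀ n : Fin M, (Φ n ⬝ᵥ c) ^ (2 * m - 2) * (Φ n ⬝ᵥ x) ^ 2 = 0 := by
      intro n
      have := (Finset.sum_eq_zero_iff_of_nonneg (fun n _ => hterm n)).mp h.symm
      exact this n (Finset.mem_univ n)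
    have hprod : ∀ n : Fin M, (Φ n ⬝ᵥ c) * (Φ n ⬝ᵥ x) = 0 := by
      intro n
      rcases mul_eq_zero.mp (hzero n) with h1 | h1
      · rcases Nat.eq_or_lt_of_le hm with hm1 | hm2
        · exfalso
          rw [← hm1] at h1
          norm_num at h1
        · have he : 2 * m - 2 ≠ 0 := by omega
          have : Φ n ⬝ᵥ c = 0 := pow_eq_zero_iff he |>.mp h1
          rw [this, zero_mul]
      · have : Φ n ⬝ᵥ x = 0 := by
          have := sq_eq_zero_iff.mp h1
          exact this
        rw [this, mul_zero]
    -- the functional S ↦ c ⬝ᵥ (S *ᵥ x) vanishes on the span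
    set S : Matrix (Fin N) (Fin N) ℝ := vecMulVec c x + vecMulVec x c with hS
    have hSsymm : S.IsSymm := by
      unfold Matrix.IsSymm
      ext i j
      simp [hS, vecMulVec_apply, transpose_apply, mul_comm, add_comm]
    have hmem := hspan S hSsymm
    have hvanish : c ⬝ᵥ (S *ᵥ x) = 0 := by
      refine Submodule.span_induction ?_ ?_ ?_ ?_ hmem
      · rintro T ⟨n, rfl⟩
        rw [dot_vmv]
        rw [dotProduct_comm c (Φ n)]
        exact hprod n
      · simp
      · intro T U _ _ hT hU
        rw [Matrix.add_mulVec, dotProduct_add, hT, hU, add_zero]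
      · intro a T _ hT
        rw [Matrix.smul_mulVec, dotProduct_smul, hT, smul_zero]
    have hpos : 0 < c ⬝ᵥ (S *ᵥ x) := by
      rw [hS, Matrix.add_mulVec, dotProduct_add, dot_vmv, dot_vmv]
      have hcc : 0 < c ⬝ᵥ c := by
        have := dotProduct_self_eq_zero (v := c)
        rcases lt_or_eq_of_le (show (0:ℝ) ≤ c ⬝ᵥ c by simpa using dotProduct_self_star_nonneg c) with h' | h'
        · exact h'
        · exact absurd (this.mp h'.symm) hc
      have hxx : 0 < x ⬝ᵥ x := by
        rcases lt_or_eq_of_le (show (0:ℝ) ≤ x ⬝ᵥ x by simpa using dotProduct_self_star_nonneg x) with h' | h'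
        · exact h'
        · exact absurd (dotProduct_self_eq_zero.mp h'.symm) hx
      have h2 : 0 ≤ (c ⬝ᵥ x) * (c ⬝ᵥ x) := mul_self_nonneg _
      nlinarith [dotProduct_comm c x, dotProduct_comm x c]
    rw [hvanish] at hpos
    exact lt_irrefl 0 hpos
end
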